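/- If a closed walk from the origin uses subaisles in block 1 with westmost aisle a₁ and, among blocks b ≥ 2, uses a subaisle in some aisle a₂ with a₂ < a₁, then the total horizontal (cross-aisle) distance travelled by the walk is at least d(1,a_max¹) − d(1,a₁) + 2(d(1,a₁) − d(1,a₂)), where a_max¹ is the eastmost aisle used in block 1. -/

import Mathlib

/-!
Reaching aisle `a₂ < a₁` below block 1 forces the walk to cross block 1 twice, once going
down and once coming back up, and both crossings use aisles `≥ a₁`. Split the closed walk
at its visit to aisle `a₂`: each half joins the origin to aisle `a₂` through some aisle
`c ≥ a₁` of the first cross-aisle, so its horizontal travel is at least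
`(hx c - ox) + (hx c - hx a₂)`. Taking `c = aMax1` in the half that visits `aMax1` gives
the bound.
-/

/-- Grid vertices: `none` is the origin, `some (r, a)` is the vertex on
cross-aisle `r` at aisle `a`. -/
abbrev WVertex : Type := Option (ℕ × ℕ)

/-- Horizontal coordinate of a vertex: the origin (at the northwest corner, on
the first cross-aisle) has abscissa `ox`, and a grid vertex in aisle `a` has
abscissa `hx a`; `hx a - hx 0` is the horizontal distance `d(1,a)` from aisle 1
to aisle `a`, identical across cross-aisles. -/
def xcoord (hx : ℕ → ℝ) (ox : ℝ) : WVertex → ℝ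
  | none => ox
  | some (_, a) => hx a

/-- One step in a warehouse with `WA` aisles and `WB` blocks: an aisle edge, a
cross-aisle edge, or an edge joining the origin to the first cross-aisle. -/
def wstep (WA WB : ℕ) (v w : WVertex) : Prop :=
  (∃ r a, r + 1 ≤ WB ∧ a < WA ∧
      ((v = some (r, a) ∧ w = some (r + 1, a)) ∨
        (w = some (r, a) ∧ v = some (r + 1, a)))) ∨
  (∃ r a, r ≤ WB ∧ a + 1 < WA ∧
      ((v = some (r, a) ∧ w = some (r, a + 1)) ∨
        (w = some (r, a) ∧ v = some (r, a + 1)))) ∨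
  (∃ a, a < WA ∧ ((v = none ∧ w = some (0, a)) ∨ (w = none ∧ v = some (0, a))))

/-- Total horizontal travel of a walk: the distance travelled in cross-aisle
edges and origin-connection edges (aisle edges contribute zero since they are
vertical). -/
def whoriz (hx : ℕ → ℝ) (ox : ℝ) (walk : List WVertex) : ℝ :=
  ((walk.zip walk.tail).map
    (fun p => |xcoord hx ox p.1 - xcoord hx ox p.2|)).sum

/-- The walk traverses (in either direction) the subaisle edge of aisle `a`
in block `r`. -/
def wtraverses (walk : List WVertex) (r a : ℕ) : Prop :=
  (some (r, a), some (r + 1, a)) ∈ walk.zip walk.tail ∨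
    (some (r + 1, a), some (r, a)) ∈ walk.zip walk.tail

theorem List.mem_zip_tail_iff_infix {α : Type*} {a b : α} {l : List α} :
    (a, b) ∈ l.zip l.tail ↔ [a, b] <:+: l := by
  induction l with
  | nil => simp
  | cons x t ih =>
    cases t with
    | nil => simp [List.infix_cons_iff]
    | cons y t =>
      simp only [List.tail_cons, List.zip_cons_cons, List.mem_cons, Prod.mk.injEq] at ih ⊢
      rw [ih, List.infix_cons_iff (l₂ := y :: t)]
      simp [List.cons_prefix_cons]

theorem List.exists_infix_pair_of_head_of_getLast {α : Type*} (p : α → Prop) :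
    ∀ {l : List α} {a b : α}, l.head? = some a → l.getLast? = some b → p a → ¬ p b →
      ∃ u w, p u ∧ ¬ p w ∧ [u, w] <:+: l
  | [], _, _, ha, _, _, _ => by simp at ha
  | [x], a, b, ha, hb, hpa, hpb => by simp_all
  | x :: y :: t, a, b, ha, hb, hpa, hpb => by
    obtain rfl : x = a := by simpa using ha
    by_cases hy : p y
    · obtain ⟨u, w, hu, hw, hinf⟩ :=
        exists_infix_pair_of_head_of_getLast p (l := y :: t) rfl (by simpa using hb) hy hpb
      exact ⟨u, w, hu, hw, hinf.trans (List.infix_cons (List.infix_refl _))⟩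
    · exact ⟨x, y, hpa, hy, ⟨[], t, rfl⟩⟩

section Variation

variable {α E : Type*} [PseudoMetricSpace E] (f : α → E)

def List.variation (l : List α) : ℝ :=
  ((l.zip l.tail).map fun p => dist (f p.1) (f p.2)).sum

@[simp]
theorem List.variation_singleton (a : α) : [a].variation f = 0 := by
  simp [List.variation]

@[simp]
theorem List.variation_cons_cons (a b : α) (l : List α) :
    (a :: b :: l).variation f = dist (f a) (f b) + (b :: l).variation f := by
  simp [List.variation]

theorem List.variation_append_cons (l₁ l₂ : List α) (v : α) :
    (l₁ ++ v :: l₂).variation f = (l₁ ++ [v]).variation f + (v :: l₂).variation f := by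
  induction l₁ with
  | nil => simp
  | cons x t ih =>
    cases t with
    | nil => simp
    | cons y t => simp_all [add_assoc]

theorem List.dist_le_variation :
    ∀ {l : List α} {a b : α}, l.head? = some a → l.getLast? = some b →
      dist (f a) (f b) ≤ l.variation f
  | [], _, _, ha, _ => by simp at ha
  | [x], a, b, ha, hb => by simp_all
  | x :: y :: t, a, b, ha, hb => by
    obtain rfl : x = a := by simpa using ha
    have := dist_le_variation (l := y :: t) rfl (by simpa using hb)
    grw [dist_triangle (f x) (f y) (f b), this, variation_cons_cons]

theorem List.dist_add_dist_le_variation {l : List α} {a b c : α}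
    (ha : l.head? = some a) (hb : l.getLast? = some b) (hc : c ∈ l) :
    dist (f a) (f c) + dist (f c) (f b) ≤ l.variation f := by
  obtain ⟨s, t, rfl⟩ := List.append_of_mem hc
  rw [variation_append_cons]
  gcongr
  · exact dist_le_variation f (by simpa [List.head?_append] using ha) (by simp)
  · exact dist_le_variation f (by simp) (by simpa [List.getLast?_append] using hb)

end Variation

theorem List.two_mul_sub_sub_le_variation {α : Type*} (f : α → ℝ) {l : List α} {a b c : α}
    (ha : l.head? = some a) (hb : l.getLast? = some b) (hc : c ∈ l) :
    2 * f c - f a - f b ≤ l.variation f := by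
  have := l.dist_add_dist_le_variation f ha hb hc
  rw [Real.dist_eq, Real.dist_eq] at this
  linarith [neg_le_abs (f a - f c), le_abs_self (f c - f b)]

theorem whoriz_eq_variation (hx : ℕ → ℝ) (ox : ℝ) (walk : List WVertex) :
    whoriz hx ox walk = walk.variation (xcoord hx ox) := by
  simp [whoriz, List.variation, Real.dist_eq]

theorem wstep_comm {WA WB : ℕ} {v w : WVertex} : wstep WA WB v w ↔ wstep WA WB w v := by
  unfold wstep; grind

theorem wtraverses_iff {walk : List WVertex} {r a : ℕ} :
    wtraverses walk r a ↔
      [some (r, a), some (r + 1, a)] <:+: walk ∨ [some (r + 1, a), some (r, a)] <:+: walk := by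
  simp only [wtraverses, List.mem_zip_tail_iff_infix]

theorem mem_of_wtraverses {walk : List WVertex} {r a : ℕ} (h : wtraverses walk r a) :
    some (r, a) ∈ walk := by
  rcases wtraverses_iff.1 h with h | h <;> exact h.subset (by simp)

def NorthOfBlockOne : WVertex → Prop
  | none => True
  | some (r, _) => r = 0

theorem wstep_leaving_north {WA WB : ℕ} {v w : WVertex} (h : wstep WA WB v w)
    (hv : NorthOfBlockOne v) (hw : ¬ NorthOfBlockOne w) :
    ∃ a, v = some (0, a) ∧ w = some (1, a) := by
  unfold wstep at h
  rcases h with ⟨r, a, -, -, ⟨rfl, rfl⟩ | ⟨rfl, rfl⟩⟩ | ⟨r, a, -, -, ⟨rfl, rfl⟩ | ⟨rfl, rfl⟩⟩ |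
      ⟨a, -, ⟨rfl, rfl⟩ | ⟨rfl, rfl⟩⟩ <;> simp_all [NorthOfBlockOne]

theorem exists_block_one_descent {WA WB : ℕ} {l : List WVertex} (hl : l.IsChain (wstep WA WB))
    {u v : WVertex} (hu : l.head? = some u) (hv : l.getLast? = some v)
    (hu' : NorthOfBlockOne u) (hv' : ¬ NorthOfBlockOne v) :
    ∃ a, [some (0, a), some (1, a)] <:+: l := by
  obtain ⟨x, y, hx, hy, hinf⟩ := List.exists_infix_pair_of_head_of_getLast _ hu hv hu' hv'
  obtain ⟨a, rfl, rfl⟩ := wstep_leaving_north (List.isChain_pair.1 (hl.infix hinf)) hx hy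
  exact ⟨a, hinf⟩

theorem exists_block_one_ascent {WA WB : ℕ} {l : List WVertex} (hl : l.IsChain (wstep WA WB))
    {u v : WVertex} (hv : l.head? = some v) (hu : l.getLast? = some u)
    (hv' : ¬ NorthOfBlockOne v) (hu' : NorthOfBlockOne u) :
    ∃ a, [some (1, a), some (0, a)] <:+: l := by
  obtain ⟨a, h⟩ := exists_block_one_descent (l := l.reverse)
    (List.isChain_reverse.2 (hl.imp fun _ _ ↦ wstep_comm.1))
    (by rwa [List.head?_reverse]) (by rwa [List.getLast?_reverse]) hu' hv'
  exact ⟨a, List.reverse_infix.1 h⟩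

/-- If a closed walk from the origin uses block-1 subaisles only at aisles in
`[a₁, aMax1]` (with `a₁` the westmost and `aMax1` the eastmost such aisle) and
also uses a subaisle of some aisle `a₂ < a₁` in a block `b ≥ 2`, then the total
horizontal (cross-aisle) distance travelled is at least
`(d(1,aMax1) − d(1,a₁)) + 2(d(1,a₁) − d(1,a₂))`. -/
theorem stmt_10 (WA WB : ℕ) (hx : ℕ → ℝ) (ox : ℝ)
    (hmono : Monotone hx) (hox : ox ≤ hx 0)
    (walk : List WVertex)
    (hchain : walk.Chain' (wstep WA WB))
    (hhead : walk.head? = some none) (hlast : walk.getLast? = some none)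
    (a₁ aMax1 : ℕ)
    (hF : wtraverses walk 0 a₁) (hL : wtraverses walk 0 aMax1)
    (hext : ∀ a, wtraverses walk 0 a → a₁ ≤ a ∧ a ≤ aMax1)
    (a₂ r₂ : ℕ) (hr₂ : 1 ≤ r₂) (h2 : wtraverses walk r₂ a₂) (ha₂ : a₂ < a₁) :
    (hx aMax1 - hx a₁) + 2 * (hx a₁ - hx a₂) ≤ whoriz hx ox walk := by
  obtain ⟨pre, post, rfl⟩ := List.append_of_mem (mem_of_wtraverses h2)
  set v : WVertex := some (r₂, a₂)
  have hv : ¬ NorthOfBlockOne v := by simp [v, NorthOfBlockOne]; omega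
  have hpre : pre ++ [v] <:+: pre ++ v :: post := ⟨[], post, by simp⟩
  have hsuf : v :: post <:+: pre ++ v :: post := (List.suffix_append ..).isInfix
  have hA : (pre ++ [v]).head? = some none := by cases pre <;> simp_all [v]
  have hA' : (pre ++ [v]).getLast? = some v := by simp
  have hB : (v :: post).head? = some v := rfl
  have hB' : (v :: post).getLast? = some none := by
    rwa [← List.getLast?_append_of_ne_nil pre (List.cons_ne_nil _ _)]
  obtain ⟨a', hdown⟩ := exists_block_one_descent (hchain.infix hpre) hA hA' trivial hv
  obtain ⟨a'', hup⟩ := exists_block_one_ascent (hchain.infix hsuf) hB hB' hv trivial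
  have ha' := hmono (hext a' (wtraverses_iff.2 (.inl (hdown.trans hpre)))).1
  have ha'' := hmono (hext a'' (wtraverses_iff.2 (.inr (hup.trans hsuf)))).1
  have h₂₁ : hx a₂ ≤ hx a₁ := hmono ha₂.le
  have h₁M : hx a₁ ≤ hx aMax1 := hmono (hext a₁ hF).2
  have ho₁ : ox ≤ hx a₁ := hox.trans (hmono (Nat.zero_le _))
  have hxo : xcoord hx ox none = ox := rfl
  have hxv : xcoord hx ox v = hx a₂ := rfl
  have half : ∀ {l : List WVertex} {p q : WVertex} {r c : ℕ}, l.head? = some p →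
      l.getLast? = some q → some (r, c) ∈ l →
      2 * hx c - xcoord hx ox p - xcoord hx ox q ≤ l.variation (xcoord hx ox) :=
    fun hp hq hc ↦ List.two_mul_sub_sub_le_variation (xcoord hx ox) hp hq hc
  rw [whoriz_eq_variation, List.variation_append_cons]
  rcases List.mem_append.1 (mem_of_wtraverses hL) with hmax | hmax
  · linarith [half hA hA' (List.mem_append_left [v] hmax),
      half hB hB' (hup.subset (by simp) : some (0, a'') ∈ v :: post)]
  · linarith [half hA hA' (hdown.subset List.mem_cons_self), half hB hB' hmax]
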